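/- Let μ_p and μ_q be orthonormal vectors in a real inner product space, and let c₁ = a·μ_p + r₁ and c₂ = b·μ_q + r₂ where r₁ and r₂ are each orthogonal to both μ_p and μ_q, with a ≥ 1/D and b ≥ 1/D for some D > 0. Then ‖c₁ - c₂‖ ≥ √2 / D. -/

import Mathlib

open scoped InnerProductSpace

/-!
Split `c₁ - c₂ = (a • μp - b • μq) + (r₁ - r₂)` into orthogonal parts. By Pythagoras,
`‖c₁ - c₂‖ ≥ ‖a • μp - b • μq‖ = √(a² + b²)`, and `a, b ≥ 1/D` bounds this below by `√2 / D`.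
-/

section Pythagoras

variable {F : Type*} [NormedAddCommGroup F] [InnerProductSpace ℝ F]

theorem norm_le_norm_add_of_inner_eq_zero {x y : F} (h : ⟪x, y⟫_ℝ = 0) : ‖x‖ ≤ ‖x + y‖ := by
  rw [mul_self_le_mul_self_iff (norm_nonneg _) (norm_nonneg _),
    norm_add_sq_eq_norm_sq_add_norm_sq_real h]
  exact le_add_of_nonneg_right (mul_self_nonneg _)

theorem norm_smul_sub_smul_of_orthonormal {u v : F} (hu : ‖u‖ = 1) (hv : ‖v‖ = 1)
    (huv : ⟪u, v⟫_ℝ = 0) (a b : ℝ) : ‖a • u - b • v‖ = Real.sqrt (a ^ 2 + b ^ 2) := by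
  have h : ⟪a • u, b • v⟫_ℝ = 0 := by
    rw [real_inner_smul_left, real_inner_smul_right, huv, mul_zero, mul_zero]
  rw [norm_sub_eq_sqrt_iff_real_inner_eq_zero.2 h, norm_smul, norm_smul, hu, hv, mul_one, mul_one,
    Real.norm_eq_abs, Real.norm_eq_abs, abs_mul_abs_self, abs_mul_abs_self, sq, sq]

end Pythagoras

theorem sqrt_two_div_le_sqrt_sq_add_sq {a b D : ℝ} (hD : 0 < D) (ha : 1 / D ≤ a) (hb : 1 / D ≤ b) :
    Real.sqrt 2 / D ≤ Real.sqrt (a ^ 2 + b ^ 2) := by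
  have hD' : 0 ≤ 1 / D := (one_div_pos.mpr hD).le
  calc Real.sqrt 2 / D = Real.sqrt ((1 / D) ^ 2 + (1 / D) ^ 2) := by
        rw [← two_mul, Real.sqrt_mul zero_le_two, Real.sqrt_sq hD', mul_one_div]
    _ ≤ Real.sqrt (a ^ 2 + b ^ 2) := by gcongr

/-- Codebook-center separation: if `c₁ = a • μp + r₁` and `c₂ = b • μq + r₂` with `μp, μq`
orthonormal, `r₁, r₂` orthogonal to both `μp` and `μq`, and `a, b ≥ 1/D` with `D > 0`,
then `‖c₁ - c₂‖ ≥ √2 / D`. -/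
theorem stmt_0 {E : Type*} [NormedAddCommGroup E] [InnerProductSpace ℝ E]
    (μp μq r₁ r₂ c₁ c₂ : E) (a b D : ℝ) (hD : 0 < D)
    (hμp : ‖μp‖ = 1) (hμq : ‖μq‖ = 1) (hortho : ⟪μp, μq⟫_ℝ = 0)
    (hr₁p : ⟪r₁, μp⟫_ℝ = 0) (hr₁q : ⟪r₁, μq⟫_ℝ = 0)
    (hr₂p : ⟪r₂, μp⟫_ℝ = 0) (hr₂q : ⟪r₂, μq⟫_ℝ = 0)
    (ha : a ≥ 1 / D) (hb : b ≥ 1 / D)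
    (hc₁ : c₁ = a • μp + r₁) (hc₂ : c₂ = b • μq + r₂) :
    ‖c₁ - c₂‖ ≥ Real.sqrt 2 / D := by
  have hsplit : c₁ - c₂ = (a • μp - b • μq) + (r₁ - r₂) := by
    rw [hc₁, hc₂]; abel
  have horth : ⟪a • μp - b • μq, r₁ - r₂⟫_ℝ = 0 := by
    rw [real_inner_comm]
    simp [inner_sub_left, inner_sub_right, real_inner_smul_right, hr₁p, hr₁q, hr₂p, hr₂q]
  calc Real.sqrt 2 / D ≤ Real.sqrt (a ^ 2 + b ^ 2) := sqrt_two_div_le_sqrt_sq_add_sq hD ha hb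
    _ = ‖a • μp - b • μq‖ := (norm_smul_sub_smul_of_orthonormal hμp hμq hortho a b).symm
    _ ≤ ‖c₁ - c₂‖ := hsplit ▸ norm_le_norm_add_of_inner_eq_zero horth
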